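/- Let W ∈ ℝ^{n×k} (n ≥ k) have unit-norm columns with orthogonality level ν = ‖SUT(I_k − WᵀW)‖₂ < 1/2, and let W = KΣ₁Jᵀ be its compact SVD with K ∈ ℝ^{n×k} orthonormal columns and J ∈ ℝ^{k×k} orthogonal. Then the orthonormal matrix V̄ = KJᵀ satisfies ‖V̄ − W‖₂ ≤ 1 − (1 − 2ν)^{1/2}. -/

import Mathlib

/-!
Since `Wᵀ W = J Σ₁² Jᵀ`, the symmetric matrix `I - Wᵀ W` is orthogonally similar to
`diag(1 - σᵢ²)`, while `V̄ - W = K diag(1 - σᵢ) Jᵀ`; both spectral norms are therefore the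
largest entries of these diagonals. Unit columns make `I - Wᵀ W` symmetric with zero diagonal,
so it is the sum of its strictly upper triangular part and the transpose of that part, and its
norm is at most `2ν`. Hence `|1 - σᵢ²| ≤ 2ν` for every `i`, and for `σᵢ ≥ 0` this forces
`|1 - σᵢ| ≤ 1 - √(1 - 2ν)`.
-/

open scoped Matrix.Norms.L2Operator
open Matrix

/-- The strictly upper triangular part of a square matrix. -/
def SUT {k : ℕ} (M : Matrix (Fin k) (Fin k) ℝ) : Matrix (Fin k) (Fin k) ℝ :=
  Matrix.of fun i j => if i < j then M i j else 0

section Isometry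

variable {𝕜 : Type*} [RCLike 𝕜] {l m n : Type*} [Fintype l] [Fintype m] [Fintype n]

lemma l2_opNorm_mul_of_conjTranspose_mul_self_eq_one [DecidableEq l] [DecidableEq n]
    {K : Matrix m n 𝕜} (hK : Kᴴ * K = 1) (A : Matrix n l 𝕜) : ‖K * A‖ = ‖A‖ := by
  have hgram : (K * A)ᴴ * (K * A) = Aᴴ * A := by
    rw [conjTranspose_mul, Matrix.mul_assoc, ← Matrix.mul_assoc Kᴴ, hK, Matrix.one_mul]
  have hsq := congrArg norm hgram
  rwa [l2_opNorm_conjTranspose_mul_self, l2_opNorm_conjTranspose_mul_self,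
    mul_self_inj (norm_nonneg _) (norm_nonneg _)] at hsq

lemma l2_opNorm_mul_of_mul_conjTranspose_self_eq_one [DecidableEq m] [DecidableEq n]
    {J : Matrix m n 𝕜} (hJ : J * Jᴴ = 1) (A : Matrix l m 𝕜) : ‖A * J‖ = ‖A‖ := by
  classical
  rw [← l2_opNorm_conjTranspose, conjTranspose_mul,
    l2_opNorm_mul_of_conjTranspose_mul_self_eq_one (by rwa [conjTranspose_conjTranspose]),
    l2_opNorm_conjTranspose]

lemma l2_opNorm_mul_diagonal_mul_conjTranspose [DecidableEq l] [DecidableEq n]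
    {K : Matrix m n 𝕜} (hK : Kᴴ * K = 1) {J : Matrix l n 𝕜} (hJ : Jᴴ * J = 1) (d : n → 𝕜) :
    ‖K * diagonal d * Jᴴ‖ = ‖d‖ := by
  rw [l2_opNorm_mul_of_mul_conjTranspose_self_eq_one (by rwa [conjTranspose_conjTranspose]),
    l2_opNorm_mul_of_conjTranspose_mul_self_eq_one hK, l2_opNorm_diagonal]

end Isometry

lemma one_sub_diagonal {n α : Type*} [DecidableEq n] [AddGroupWithOne α] (d : n → α) :
    diagonal (fun i => 1 - d i) = 1 - diagonal d := by
  rw [← diagonal_one, diagonal_sub]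

section SVD

variable {m n : Type*} [Fintype n] [DecidableEq n]

lemma one_sub_transpose_mul_self_of_svd [Fintype m] {W K : Matrix m n ℝ} {J : Matrix n n ℝ}
    {σ : n → ℝ} (hK : Kᵀ * K = 1) (hJ : Jᵀ * J = 1) (hSVD : W = K * diagonal σ * Jᵀ) :
    1 - Wᵀ * W = J * diagonal (fun i => 1 - σ i ^ 2) * Jᵀ := by
  have hJJt : J * Jᵀ = 1 := mul_eq_one_comm.mp hJ
  have hgram : Wᵀ * W = J * diagonal (fun i => σ i ^ 2) * Jᵀ := by
    simp only [hSVD, transpose_mul, transpose_transpose, diagonal_transpose, Matrix.mul_assoc]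
    rw [← Matrix.mul_assoc Kᵀ, hK, Matrix.one_mul, ← Matrix.mul_assoc (diagonal σ),
      diagonal_mul_diagonal]
    simp only [sq]
  rw [hgram, one_sub_diagonal, Matrix.mul_sub, Matrix.sub_mul, Matrix.mul_one, hJJt]

lemma sub_of_svd {W K : Matrix m n ℝ} {J : Matrix n n ℝ} {σ : n → ℝ}
    (hSVD : W = K * diagonal σ * Jᵀ) :
    K * Jᵀ - W = K * diagonal (fun i => 1 - σ i) * Jᵀ := by
  rw [hSVD, one_sub_diagonal, Matrix.mul_sub, Matrix.sub_mul, Matrix.mul_one]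

end SVD

lemma l2_opNorm_transpose {m n : Type*} [Fintype m] [Fintype n] [DecidableEq m] [DecidableEq n]
    (A : Matrix m n ℝ) : ‖Aᵀ‖ = ‖A‖ := by
  rw [← conjTranspose_eq_transpose_of_trivial, l2_opNorm_conjTranspose]

lemma transpose_mul_self_apply_self {m n : Type*} [Fintype m] (W : Matrix m n ℝ) (j : n) :
    (Wᵀ * W) j j = ∑ i, W i j ^ 2 := by
  simp only [mul_apply, transpose_apply, sq]

lemma SUT_add_transpose_SUT {k : ℕ} {M : Matrix (Fin k) (Fin k) ℝ} (hsymm : Mᵀ = M)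
    (hdiag : ∀ i, M i i = 0) : SUT M + (SUT M)ᵀ = M := by
  ext i j
  simp only [SUT, Matrix.add_apply, transpose_apply, of_apply]
  rcases lt_trichotomy i j with h | rfl | h
  · simp [h, h.not_gt]
  · simp [hdiag]
  · simpa [h, h.not_gt] using congrFun (congrFun hsymm i) j

lemma norm_le_two_mul_norm_SUT {k : ℕ} {M : Matrix (Fin k) (Fin k) ℝ} (hsymm : Mᵀ = M)
    (hdiag : ∀ i, M i i = 0) : ‖M‖ ≤ 2 * ‖SUT M‖ := by
  calc ‖M‖ = ‖SUT M + (SUT M)ᵀ‖ := by rw [SUT_add_transpose_SUT hsymm hdiag]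
    _ ≤ ‖SUT M‖ + ‖(SUT M)ᵀ‖ := norm_add_le _ _
    _ = 2 * ‖SUT M‖ := by rw [l2_opNorm_transpose]; ring

lemma abs_one_sub_le_one_sub_sqrt {s ν : ℝ} (hs : 0 ≤ s) (hν : 2 * ν ≤ 1)
    (h : |1 - s ^ 2| ≤ 2 * ν) : |1 - s| ≤ 1 - √(1 - 2 * ν) := by
  set t := √(1 - 2 * ν)
  have ht0 : 0 ≤ t := Real.sqrt_nonneg _
  have ht2 : t ^ 2 = 1 - 2 * ν := Real.sq_sqrt (by linarith)
  obtain ⟨hlo, hhi⟩ := abs_le.mp h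
  have ht_le_s : t ≤ s := (pow_le_pow_iff_left₀ ht0 hs two_ne_zero).mp (by linarith)
  -- `(2 - t)² - (2 - t²) = 2 (1 - t)²`, so `s² ≤ 2 - t²` gives `s ≤ 2 - t`.
  have hs_le : s ≤ 2 - t := by nlinarith [sq_nonneg (1 - t)]
  rw [abs_le]
  constructor <;> linarith

theorem stmt11_general {n k : ℕ} (W : Matrix (Fin n) (Fin k) ℝ)
    (hcols : ∀ j, ∑ i, (W i j) ^ 2 = 1)
    (ν : ℝ) (hν : ν = ‖SUT (1 - Wᵀ * W)‖) (hν2 : ν < 1 / 2)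
    (K : Matrix (Fin n) (Fin k) ℝ) (hK : Kᵀ * K = 1)
    (J : Matrix (Fin k) (Fin k) ℝ) (hJ : Jᵀ * J = 1)
    (σ : Fin k → ℝ) (hσ : ∀ i, 0 ≤ σ i)
    (hSVD : W = K * Matrix.diagonal σ * Jᵀ) :
    ‖K * Jᵀ - W‖ ≤ 1 - Real.sqrt (1 - 2 * ν) := by
  have hν0 : 0 ≤ ν := hν ▸ norm_nonneg _
  have hK' : Kᴴ * K = 1 := by rwa [conjTranspose_eq_transpose_of_trivial]
  have hJ' : Jᴴ * J = 1 := by rwa [conjTranspose_eq_transpose_of_trivial]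
  have hgap : ‖1 - Wᵀ * W‖ ≤ 2 * ν := hν ▸ norm_le_two_mul_norm_SUT
    (by rw [transpose_sub, transpose_one, transpose_mul, transpose_transpose])
    fun j => by
      rw [Matrix.sub_apply, one_apply_eq, transpose_mul_self_apply_self, hcols, sub_self]
  have hσsq : ∀ i, |1 - σ i ^ 2| ≤ 2 * ν := by
    rwa [one_sub_transpose_mul_self_of_svd hK hJ hSVD, ← conjTranspose_eq_transpose_of_trivial,
      l2_opNorm_mul_diagonal_mul_conjTranspose hJ' hJ', pi_norm_le_iff_of_nonneg (by linarith)]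
      at hgap
  rw [sub_of_svd hSVD, ← conjTranspose_eq_transpose_of_trivial,
    l2_opNorm_mul_diagonal_mul_conjTranspose hK' hJ',
    pi_norm_le_iff_of_nonneg (sub_nonneg.mpr (Real.sqrt_le_one.mpr (by linarith)))]
  exact fun i => abs_one_sub_le_one_sub_sqrt (hσ i) (by linarith) (hσsq i)

/-- If `W` has unit columns with orthogonality level `ν < 1/2` and compact SVD
`W = KΣ₁Jᵀ`, then the orthonormal matrix `V̄ = KJᵀ` satisfies
`‖V̄ − W‖₂ ≤ 1 − (1 − 2ν)^{1/2}`. -/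
theorem stmt11 {n k : ℕ} (hnk : k ≤ n) (W : Matrix (Fin n) (Fin k) ℝ)
    (hcols : ∀ j, ∑ i, (W i j) ^ 2 = 1)
    (ν : ℝ) (hν : ν = ‖SUT (1 - Wᵀ * W)‖) (hν2 : ν < 1 / 2)
    (K : Matrix (Fin n) (Fin k) ℝ) (hK : Kᵀ * K = 1)
    (J : Matrix (Fin k) (Fin k) ℝ) (hJ : Jᵀ * J = 1)
    (σ : Fin k → ℝ) (hσ : ∀ i, 0 ≤ σ i)
    (hSVD : W = K * Matrix.diagonal σ * Jᵀ) :
    ‖K * Jᵀ - W‖ ≤ 1 - Real.sqrt (1 - 2 * ν) :=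
  stmt11_general W hcols ν hν hν2 K hK J hJ σ hσ hSVD
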